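/- For any nonempty clopen set U ⊆ X_A and any point x ∈ U, there exists α ∈ Γ_A such that α(x) ≠ x, α² = id, and α is the identity on the complement of U. -/
import Mathlib


open Set

instance homeoGroup {α : Type*} [TopologicalSpace α] : Group (α ≃ₜ α) where
  mul a b := b.trans a
  one := Homeomorph.refl α
  inv := Homeomorph.symm
  mul_assoc _ _ _ := Homeomorph.ext fun _ => rfl
  one_mul _ := Homeomorph.ext fun _ => rfl
  mul_one _ := Homeomorph.ext fun _ => rfl
  inv_mul_cancel a := Homeomorph.ext fun x => a.symm_apply_apply x

@[simp] theorem homeo_mul_apply {α : Type*} [TopologicalSpace α] (a b : α ≃ₜ α) (x : α) :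
    (a * b) x = a (b x) := rfl

@[simp] theorem homeo_inv_apply {α : Type*} [TopologicalSpace α] (a : α ≃ₜ α) (x : α) :
    a⁻¹ x = a.symm x := rfl

/-- The one-sided shift space `X_A` of a 0-1 matrix `A`. -/
abbrev ShiftSpace {N : ℕ} (A : Fin N → Fin N → Bool) : Type :=
  {x : ℕ → Fin N // ∀ n, A (x n) (x (n + 1)) = true}

/-- The one-sided shift `σ_A`. -/
def shiftMap {N : ℕ} (A : Fin N → Fin N → Bool) (x : ShiftSpace A) : ShiftSpace A :=
  ⟨fun n => x.1 (n + 1), fun n => x.2 (n + 1)⟩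

/-- Irreducibility of the matrix `A`: any two indices are connected by a path. -/
def MatrixIrreducible {N : ℕ} (A : Fin N → Fin N → Bool) : Prop :=
  ∀ i j : Fin N, ∃ n : ℕ, 0 < n ∧ ∃ w : ℕ → Fin N, w 0 = i ∧ w n = j ∧
    ∀ k < n, A (w k) (w (k + 1)) = true

/-- Condition (I): the shift space is homeomorphic to the Cantor set. -/
def ConditionI {N : ℕ} (A : Fin N → Fin N → Bool) : Prop :=
  Nonempty (ShiftSpace A ≃ₜ (ℕ → Bool))

/-- The continuous full group `Γ_A`. -/
def fullGroup {N : ℕ} (A : Fin N → Fin N → Bool) :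
    Subgroup (ShiftSpace A ≃ₜ ShiftSpace A) where
  carrier := {τ | ∃ k l : ShiftSpace A → ℕ, Continuous k ∧ Continuous l ∧
    ∀ x, (shiftMap A)^[k x] (τ x) = (shiftMap A)^[l x] x}
  one_mem' := ⟨fun _ => 0, fun _ => 0, continuous_const, continuous_const, fun _ => rfl⟩
  mul_mem' := by
    rintro a b ⟨k1, l1, hk1, hl1, h1⟩ ⟨k2, l2, hk2, hl2, h2⟩
    refine ⟨fun x => k2 x + k1 (b x), fun x => l1 (b x) + l2 x,
      hk2.add (hk1.comp b.continuous), (hl1.comp b.continuous).add hl2, fun x => ?_⟩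
    calc (shiftMap A)^[k2 x + k1 (b x)] ((a * b) x)
        = (shiftMap A)^[k2 x] ((shiftMap A)^[k1 (b x)] (a (b x))) :=
          Function.iterate_add_apply _ _ _ _
      _ = (shiftMap A)^[k2 x] ((shiftMap A)^[l1 (b x)] (b x)) := by rw [h1]
      _ = (shiftMap A)^[l1 (b x)] ((shiftMap A)^[k2 x] (b x)) := by
          rw [← Function.iterate_add_apply, Nat.add_comm, Function.iterate_add_apply]
      _ = (shiftMap A)^[l1 (b x)] ((shiftMap A)^[l2 x] x) := by rw [h2]
      _ = (shiftMap A)^[l1 (b x) + l2 x] x := (Function.iterate_add_apply _ _ _ _).symm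
  inv_mem' := by
    rintro a ⟨k, l, hk, hl, h⟩
    refine ⟨fun x => l (a⁻¹ x), fun x => k (a⁻¹ x),
      hl.comp a.symm.continuous, hk.comp a.symm.continuous, fun x => ?_⟩
    have := (h (a⁻¹ x)).symm
    rwa [show a (a⁻¹ x) = x from a.apply_symm_apply x] at this

/-- The local subgroup `Γ_O` of `Γ_A` associated to a set `O`. -/
def localGroup {N : ℕ} (A : Fin N → Fin N → Bool) (O : Set (ShiftSpace A)) :
    Subgroup (ShiftSpace A ≃ₜ ShiftSpace A) where
  carrier := {γ | γ ∈ fullGroup A ∧ ∀ x ∉ O, γ x = x}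
  one_mem' := ⟨(fullGroup A).one_mem, fun _ _ => rfl⟩
  mul_mem' := by
    rintro a b ⟨haΓ, ha⟩ ⟨hbΓ, hb⟩
    exact ⟨mul_mem haΓ hbΓ, fun x hx => by
      show a (b x) = x
      rw [hb x hx, ha x hx]⟩
  inv_mem' := by
    rintro a ⟨haΓ, ha⟩
    refine ⟨inv_mem haΓ, fun x hx => ?_⟩
    conv_lhs => rw [← ha x hx]
    exact a.symm_apply_apply x

/-- The commutant in `Γ_A` of a set of homeomorphisms. -/
def commutant {N : ℕ} (A : Fin N → Fin N → Bool)
    (S : Set (ShiftSpace A ≃ₜ ShiftSpace A)) : Set (ShiftSpace A ≃ₜ ShiftSpace A) :=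
  {ξ | ξ ∈ fullGroup A ∧ ∀ γ ∈ S, ξ * γ = γ * ξ}

/-- The support `P_γ` of a homeomorphism `γ`. -/
def suppHomeo {N : ℕ} {A : Fin N → Fin N → Bool} (γ : ShiftSpace A ≃ₜ ShiftSpace A) :
    Set (ShiftSpace A) :=
  closure {x | γ x ≠ x}

/-- The support `P_H` of a set of homeomorphisms. -/
def suppSet {N : ℕ} {A : Fin N → Fin N → Bool} (H : Set (ShiftSpace A ≃ₜ ShiftSpace A)) :
    Set (ShiftSpace A) :=
  closure (⋃ η ∈ H, interior (suppHomeo η))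



/-! ### Auxiliary lemmas for `stmt2` -/

lemma shiftIterAux {N : ℕ} (A : Fin N → Fin N → Bool) (k : ℕ) (z : ShiftSpace A) (i : ℕ) :
    ((shiftMap A)^[k] z).1 i = z.1 (i + k) := by
  induction k generalizing z with
  | zero => rfl
  | succ k ih => rw [Function.iterate_succ_apply, ih]; rfl

lemma cylClopenAux {N : ℕ} (A : Fin N → Fin N → Bool) (n : ℕ) (g : ℕ → Fin N) :
    IsClopen {z : ShiftSpace A | ∀ i < n, z.1 i = g i} := by
  have h : {z : ShiftSpace A | ∀ i < n, z.1 i = g i}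
      = ⋂ i ∈ Finset.range n, {z : ShiftSpace A | z.1 i = g i} := by
    ext z; simp [Finset.mem_range]
  rw [h]
  refine isClopen_biInter_finset fun i _ => ?_
  exact (isClopen_discrete {g i}).preimage ((continuous_apply i).comp continuous_subtype_val)

lemma cylBasisAux {N : ℕ} (A : Fin N → Fin N → Bool) (U : Set (ShiftSpace A)) (hU : IsOpen U)
    (x : ShiftSpace A) (hx : x ∈ U) :
    ∃ n, {z : ShiftSpace A | ∀ i < n, z.1 i = x.1 i} ⊆ U := by
  obtain ⟨V, hV, rfl⟩ := isOpen_induced_iff.mp hU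
  obtain ⟨I, u, hu, hsub⟩ := isOpen_pi_iff.mp hV x.1 hx
  refine ⟨(I.sup id) + 1, fun z hz => ?_⟩
  refine hsub fun i hi => ?_
  have hi' : i ∈ I := hi
  have hle : i ≤ I.sup id := Finset.le_sup (f := id) hi'
  rw [hz i (by omega)]
  exact (hu i hi').2

lemma noIsolatedAux {N : ℕ} {A : Fin N → Fin N → Bool} (hI : ConditionI A)
    (x : ShiftSpace A) : ¬ IsOpen ({x} : Set (ShiftSpace A)) := by
  obtain ⟨e⟩ := hI
  intro h
  have h2 : IsOpen ({e x} : Set (ℕ → Bool)) := by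
    have he : ({e x} : Set (ℕ → Bool)) = e.symm ⁻¹' {x} := by
      ext z
      constructor
      · rintro rfl; exact e.symm_apply_apply x
      · intro hz
        simp only [Set.mem_singleton_iff]
        have := congrArg e hz
        rwa [e.apply_symm_apply] at this
    rw [he]
    exact h.preimage e.symm.continuous
  obtain ⟨I, u, hu, hsub⟩ := isOpen_pi_iff.mp h2 (e x) rfl
  obtain ⟨j, hj⟩ := Infinite.exists_notMem_finset I
  classical
  have hq : (fun i => if i ∈ I then e x i else !(e x i)) ∈ (I : Set ℕ).pi u := by
    intro i hi
    have hi' : i ∈ I := hi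
    simp only [if_pos hi']
    exact (hu i hi').2
  have h3 := hsub hq
  have h4 := congrFun (Set.mem_singleton_iff.mp h3) j
  simp [hj] at h4

section SwapAux
variable {N : ℕ} (A : Fin N → Fin N → Bool) (m r : ℕ) (b c : ℕ → Fin N)

open Classical in
/-- Swap the cylinder `[b 0 .. b m]` with the cylinder `[c 0 .. c (m+r)]`. -/
noncomputable def swapFun (z : ShiftSpace A) : ℕ → Fin N :=
  if ∀ i < m + 1, z.1 i = b i then fun i => if i ≤ m + r then c i else z.1 (i - r)
  else if ∀ i < m + r + 1, z.1 i = c i then fun i => if i ≤ m then b i else z.1 (i + r)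
  else z.1

lemma swapAdm (H1 : ∀ i, A (b i) (b (i + 1)) = true)
    (H2 : ∀ i < m + r, A (c i) (c (i + 1)) = true)
    (H3 : c (m + r) = b m) (z : ShiftSpace A) (i : ℕ) :
    A (swapFun A m r b c z i) (swapFun A m r b c z (i + 1)) = true := by
  classical
  unfold swapFun
  split_ifs with h1 h2
  · rcases lt_trichotomy i (m + r) with hi | hi | hi
    · simp only [if_pos (by omega : i ≤ m + r), if_pos (by omega : i + 1 ≤ m + r)]
      exact H2 i hi
    · simp only [if_pos (by omega : i ≤ m + r), if_neg (by omega : ¬ i + 1 ≤ m + r)]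
      rw [hi, H3, show m + r + 1 - r = m + 1 from by omega, ← h1 m (by omega)]
      exact z.2 m
    · simp only [if_neg (by omega : ¬ i ≤ m + r), if_neg (by omega : ¬ i + 1 ≤ m + r)]
      rw [show i + 1 - r = (i - r) + 1 from by omega]
      exact z.2 (i - r)
  · rcases lt_trichotomy i m with hi | hi | hi
    · simp only [if_pos (by omega : i ≤ m), if_pos (by omega : i + 1 ≤ m)]
      exact H1 i
    · simp only [if_pos (by omega : i ≤ m), if_neg (by omega : ¬ i + 1 ≤ m)]
      rw [hi, ← H3, ← h2 (m + r) (by omega), show m + 1 + r = (m + r) + 1 from by omega]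
      exact z.2 (m + r)
    · simp only [if_neg (by omega : ¬ i ≤ m), if_neg (by omega : ¬ i + 1 ≤ m)]
      rw [show i + 1 + r = (i + r) + 1 from by omega]
      exact z.2 (i + r)
  · exact z.2 i

/-- The swap as a self-map of the shift space. -/
noncomputable def swapF (H1 : ∀ i, A (b i) (b (i + 1)) = true)
    (H2 : ∀ i < m + r, A (c i) (c (i + 1)) = true)
    (H3 : c (m + r) = b m) (z : ShiftSpace A) : ShiftSpace A :=
  ⟨swapFun A m r b c z, swapAdm A m r b c H1 H2 H3 z⟩

lemma swapFF (H1 : ∀ i, A (b i) (b (i + 1)) = true)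
    (H2 : ∀ i < m + r, A (c i) (c (i + 1)) = true)
    (H3 : c (m + r) = b m) (H4 : c m ≠ b m) (z : ShiftSpace A) :
    swapF A m r b c H1 H2 H3 (swapF A m r b c H1 H2 H3 z) = z := by
  classical
  apply Subtype.ext
  show swapFun A m r b c _ = z.1
  by_cases h1 : ∀ i < m + 1, z.1 i = b i
  · have hQ : ∀ i < m + r + 1, (swapF A m r b c H1 H2 H3 z).1 i = c i := by
      intro i hi
      show swapFun A m r b c z i = c i
      unfold swapFun
      rw [if_pos h1, if_pos (by omega : i ≤ m + r)]
    have hP : ¬ ∀ i < m + 1, (swapF A m r b c H1 H2 H3 z).1 i = b i := by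
      intro hP
      exact H4 ((hQ m (by omega)).symm.trans (hP m (by omega)))
    unfold swapFun
    rw [if_neg hP, if_pos hQ]
    funext i
    by_cases hi : i ≤ m
    · rw [if_pos hi, h1 i (by omega)]
    · rw [if_neg hi]
      show swapFun A m r b c z (i + r) = z.1 i
      unfold swapFun
      rw [if_pos h1, if_neg (by omega : ¬ i + r ≤ m + r),
        show i + r - r = i from by omega]
  · by_cases h2 : ∀ i < m + r + 1, z.1 i = c i
    · have hP : ∀ i < m + 1, (swapF A m r b c H1 H2 H3 z).1 i = b i := by
        intro i hi
        show swapFun A m r b c z i = b i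
        unfold swapFun
        rw [if_neg h1, if_pos h2, if_pos (by omega : i ≤ m)]
      unfold swapFun
      rw [if_pos hP]
      funext i
      by_cases hi : i ≤ m + r
      · rw [if_pos hi, h2 i (by omega)]
      · rw [if_neg hi]
        show swapFun A m r b c z (i - r) = z.1 i
        unfold swapFun
        rw [if_neg h1, if_pos h2, if_neg (by omega : ¬ i - r ≤ m),
          show i - r + r = i from by omega]
    · have hz : swapF A m r b c H1 H2 H3 z = z := by
        apply Subtype.ext
        show swapFun A m r b c z = z.1
        unfold swapFun
        rw [if_neg h1, if_neg h2]
      rw [hz]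
      show swapFun A m r b c z = z.1
      unfold swapFun
      rw [if_neg h1, if_neg h2]

lemma swapCont (H1 : ∀ i, A (b i) (b (i + 1)) = true)
    (H2 : ∀ i < m + r, A (c i) (c (i + 1)) = true)
    (H3 : c (m + r) = b m) : Continuous (swapF A m r b c H1 H2 H3) := by
  classical
  apply Continuous.subtype_mk
  show Continuous fun z => swapFun A m r b c z
  refine continuous_pi fun i => ?_
  have hPc : IsClopen {z : ShiftSpace A | ∀ i < m + 1, z.1 i = b i} := cylClopenAux A (m+1) b
  have hQc : IsClopen {z : ShiftSpace A | ∀ i < m + r + 1, z.1 i = c i} :=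
    cylClopenAux A (m+r+1) c
  unfold swapFun
  simp only [apply_ite (fun f : ℕ → Fin N => f i)]
  apply Continuous.if
  · intro a ha
    rw [hPc.frontier_eq] at ha
    exact absurd ha (Set.notMem_empty a)
  · rcases le_or_gt i (m + r) with h | h
    · simp only [if_pos h]; exact continuous_const
    · simp only [if_neg (by omega : ¬ i ≤ m + r)]
      exact (continuous_apply (i - r)).comp continuous_subtype_val
  · apply Continuous.if
    · intro a ha
      rw [hQc.frontier_eq] at ha
      exact absurd ha (Set.notMem_empty a)
    · rcases le_or_gt i m with h | h
      · simp only [if_pos h]; exact continuous_const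
      · simp only [if_neg (by omega : ¬ i ≤ m)]
        exact (continuous_apply (i + r)).comp continuous_subtype_val
    · exact (continuous_apply i).comp continuous_subtype_val

end SwapAux

theorem stmt2 {N : ℕ} (hN : 1 < N) (A : Fin N → Fin N → Bool)
    (hA : MatrixIrreducible A) (hI : ConditionI A)
    (U : Set (ShiftSpace A)) (hU : IsClopen U) (hUne : U.Nonempty)
    (x : ShiftSpace A) (hx : x ∈ U) :
    ∃ α ∈ fullGroup A, α x ≠ x ∧ α * α = 1 ∧ ∀ y ∉ U, α y = y := by
  classical
  obtain ⟨n, hn⟩ := cylBasisAux A U hU.isOpen x hx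
  have hCcl := cylClopenAux A n x.1
  have hxC : x ∈ {z : ShiftSpace A | ∀ i < n, z.1 i = x.1 i} := fun i _ => rfl
  obtain ⟨y, hyC, hyx⟩ : ∃ y ∈ {z : ShiftSpace A | ∀ i < n, z.1 i = x.1 i}, y ≠ x := by
    by_contra hcon
    push_neg at hcon
    apply noIsolatedAux hI x
    have he : {z : ShiftSpace A | ∀ i < n, z.1 i = x.1 i} = {x} :=
      Set.eq_singleton_iff_unique_mem.mpr ⟨hxC, hcon⟩
    have := hCcl.isOpen
    rwa [he] at this
  have hex : ∃ i, y.1 i ≠ x.1 i := by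
    by_contra hc
    push_neg at hc
    exact hyx (Subtype.ext (funext hc))
  set m := Nat.find hex with hmdef
  have hmne : y.1 m ≠ x.1 m := Nat.find_spec hex
  have hmmin : ∀ i < m, y.1 i = x.1 i := fun i hi => by
    have := Nat.find_min hex hi
    simpa using this
  have hnm : n ≤ m := by
    by_contra hc
    exact hmne (hyC m (by omega))
  obtain ⟨r, hr0, w, hw0, hwr, hwadm⟩ := hA (y.1 m) (x.1 m)
  set c : ℕ → Fin N := fun i => if i ≤ m then y.1 i else w (i - m) with hcdef
  have hcw : ∀ i, m ≤ i → c i = w (i - m) := by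
    intro i hi
    rcases eq_or_lt_of_le hi with h | h
    · simp [hcdef, ← h, hw0]
    · simp [hcdef, if_neg (by omega : ¬ i ≤ m)]
  have hcy : ∀ i, i ≤ m → c i = y.1 i := by
    intro i hi
    simp [hcdef, if_pos hi]
  have H1 : ∀ i, A (x.1 i) (x.1 (i + 1)) = true := x.2
  have H2 : ∀ i < m + r, A (c i) (c (i + 1)) = true := by
    intro i hi
    rcases le_or_gt (i + 1) m with h | h
    · rw [hcy i (by omega), hcy (i + 1) h]
      exact y.2 i
    · rw [hcw i (by omega), hcw (i + 1) (by omega),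
        show i + 1 - m = (i - m) + 1 from by omega]
      exact hwadm (i - m) (by omega)
  have H3 : c (m + r) = x.1 m := by
    rw [hcw (m + r) (by omega), show m + r - m = r from by omega, hwr]
  have H4 : c m ≠ x.1 m := by
    rw [hcy m le_rfl]
    exact hmne
  have hFF := swapFF A m r x.1 c H1 H2 H3 H4
  have hFc := swapCont A m r x.1 c H1 H2 H3
  refine ⟨⟨⟨swapF A m r x.1 c H1 H2 H3, swapF A m r x.1 c H1 H2 H3, hFF, hFF⟩, hFc, hFc⟩,
    ?_, ?_, ?_, ?_⟩
  · -- membership in the full group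
    refine ⟨fun z => if ∀ i < m + 1, z.1 i = x.1 i then m + r + 1
        else if ∀ i < m + r + 1, z.1 i = c i then m + 1 else 0,
      fun z => if ∀ i < m + 1, z.1 i = x.1 i then m + 1
        else if ∀ i < m + r + 1, z.1 i = c i then m + r + 1 else 0, ?_, ?_, ?_⟩
    · apply Continuous.if
      · intro a ha
        rw [(cylClopenAux A (m + 1) x.1).frontier_eq] at ha
        exact absurd ha (Set.notMem_empty a)
      · exact continuous_const
      · apply Continuous.if
        · intro a ha
          rw [(cylClopenAux A (m + r + 1) c).frontier_eq] at ha
          exact absurd ha (Set.notMem_empty a)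
        · exact continuous_const
        · exact continuous_const
    · apply Continuous.if
      · intro a ha
        rw [(cylClopenAux A (m + 1) x.1).frontier_eq] at ha
        exact absurd ha (Set.notMem_empty a)
      · exact continuous_const
      · apply Continuous.if
        · intro a ha
          rw [(cylClopenAux A (m + r + 1) c).frontier_eq] at ha
          exact absurd ha (Set.notMem_empty a)
        · exact continuous_const
        · exact continuous_const
    · intro z
      by_cases h1 : ∀ i < m + 1, z.1 i = x.1 i
      · simp only [if_pos h1]
        apply Subtype.ext
        funext i
        rw [shiftIterAux, shiftIterAux]
        show swapFun A m r x.1 c z (i + (m + r + 1)) = z.1 (i + (m + 1))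
        unfold swapFun
        rw [if_pos h1, if_neg (by omega : ¬ i + (m + r + 1) ≤ m + r),
          show i + (m + r + 1) - r = i + (m + 1) from by omega]
      · by_cases h2 : ∀ i < m + r + 1, z.1 i = c i
        · simp only [if_neg h1, if_pos h2]
          apply Subtype.ext
          funext i
          rw [shiftIterAux, shiftIterAux]
          show swapFun A m r x.1 c z (i + (m + 1)) = z.1 (i + (m + r + 1))
          unfold swapFun
          rw [if_neg h1, if_pos h2, if_neg (by omega : ¬ i + (m + 1) ≤ m),
            show i + (m + 1) + r = i + (m + r + 1) from by omega]
        · simp only [if_neg h1, if_neg h2]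
          show (shiftMap A)^[0] (swapF A m r x.1 c H1 H2 H3 z) = (shiftMap A)^[0] z
          simp only [Function.iterate_zero, id_eq]
          apply Subtype.ext
          show swapFun A m r x.1 c z = z.1
          unfold swapFun
          rw [if_neg h1, if_neg h2]
  · -- moves x
    intro h
    have hPx : ∀ i < m + 1, x.1 i = x.1 i := fun _ _ => rfl
    have hc : (swapF A m r x.1 c H1 H2 H3 x).1 m = c m := by
      show swapFun A m r x.1 c x m = c m
      unfold swapFun
      rw [if_pos hPx, if_pos (by omega : m ≤ m + r)]
    have hx' : (swapF A m r x.1 c H1 H2 H3 x) = x := h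
    rw [hx'] at hc
    exact H4 hc.symm
  · -- involution
    refine Homeomorph.ext fun z => ?_
    exact hFF z
  · -- identity outside U
    intro z hzU
    have h1 : ¬ ∀ i < m + 1, z.1 i = x.1 i := fun h =>
      hzU (hn fun i hi => h i (by omega))
    have h2 : ¬ ∀ i < m + r + 1, z.1 i = c i := fun h =>
      hzU (hn fun i hi => by
        rw [h i (by omega), hcy i (by omega)]
        exact hmmin i (by omega))
    apply Subtype.ext
    show swapFun A m r x.1 c z = z.1
    unfold swapFun
    rw [if_neg h1, if_neg h2]
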